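/- Let (W,S) be a Coxeter system, H a group, N a subgroup of H normalized by each element in the image of a map n : S → H. Suppose n_s² ∈ N for all s ∈ S, and the braid relations hold: for all distinct s, s' ∈ S with ss' of finite order k(s,s'), n_s n_{s'} n_s ⋯ = n_{s'} n_s n_{s'} ⋯ with k(s,s') factors on each side. Then for every word s_{i₁}, …, s_{i_k} in S whose product is the identity in W, the product n_{s_{i₁}} ⋯ n_{s_{i_k}} lies in N. -/

import Mathlib

/-!
The elements `n b` normalize `N`, so they live in the normalizer `K` of `N`, and their images
`g b` in `K ⧸ N` are involutions satisfying the braid relations. For involutions `x, y` the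
braid relation of length `m` is equivalent to `(x * y) ^ m = 1`, so `g` satisfies the Coxeter
relations and extends to a homomorphism `W →* K ⧸ N` sending `s_b` to `g b`. A word with trivial
product in `W` is therefore sent to `1`, i.e. the corresponding product of the `n b` lies in `N`.
-/

namespace Stmt11

/-- The alternating word `x * y * x * ⋯` with `k` factors. -/
def altWord {A : Type*} [Monoid A] (x y : A) : ℕ → A
  | 0 => 1
  | k + 1 => x * altWord y x k

section altWord

variable {A G : Type*}

theorem map_altWord {F : Type*} [Monoid A] [Monoid G] [FunLike F A G] [MonoidHomClass F A G]
    (f : F) (x y : A) : ∀ k, f (altWord x y k) = altWord (f x) (f y) k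
  | 0 => map_one f
  | k + 1 => by rw [altWord, altWord, map_mul, map_altWord f y x k]

theorem mul_pow_mul_altWord [Monoid G] {x y : G} (hx : x * x = 1) (hy : y * y = 1) :
    ∀ m, (x * y) ^ m * altWord y x m = altWord x y m
  | 0 => by simp [altWord]
  | m + 1 => calc
      (x * y) ^ (m + 1) * altWord y x (m + 1)
          = x * (y * x) ^ m * (y * y) * altWord x y m := by
        rw [pow_succ, ← mul_assoc, mul_pow_mul, altWord]; simp only [mul_assoc]
      _ = x * ((y * x) ^ m * altWord x y m) := by rw [hy, mul_one, mul_assoc]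
      _ = altWord x y (m + 1) := by rw [mul_pow_mul_altWord hy hx m, altWord]

theorem mul_pow_eq_one_of_altWord_eq [Group G] {x y : G} (hx : x * x = 1) (hy : y * y = 1)
    {m : ℕ} (h : altWord x y m = altWord y x m) : (x * y) ^ m = 1 := by
  have := mul_pow_mul_altWord hx hy m
  rwa [← h, mul_eq_right] at this

end altWord

section Coxeter

variable {B W G : Type*} [Group W] {M : CoxeterMatrix B}

theorem isLiftable_of_braid [Group G] {f : B → G} (hsq : ∀ b, f b * f b = 1)
    (hbraid : ∀ b b' : B, b ≠ b' → M b b' ≠ 0 →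
      altWord (f b) (f b') (M b b') = altWord (f b') (f b) (M b b')) :
    M.IsLiftable f := by
  intro b b'
  rcases eq_or_ne b b' with rfl | hne
  · rw [M.diagonal, pow_one, hsq]
  rcases eq_or_ne (M b b') 0 with h0 | h0
  · rw [h0, pow_zero]
  · exact mul_pow_eq_one_of_altWord_eq (hsq b) (hsq b') (hbraid b b' hne h0)

theorem _root_.CoxeterSystem.lift_wordProd [Monoid G] (cs : CoxeterSystem M W) {f : B → G}
    (hf : M.IsLiftable f) (l : List B) : cs.lift ⟨f, hf⟩ (cs.wordProd l) = (l.map f).prod := by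
  simp [CoxeterSystem.wordProd, map_list_prod, Function.comp_def]

theorem prod_map_eq_one_of_wordProd_eq_one [Monoid G] (cs : CoxeterSystem M W) {f : B → G}
    (hf : M.IsLiftable f) {l : List B} (hl : cs.wordProd l = 1) : (l.map f).prod = 1 := by
  rw [← cs.lift_wordProd hf, hl, map_one]

end Coxeter

theorem word_trivial_in_W_implies_product_in_N
    {B W H : Type*} [Group W] [Group H]
    (M : CoxeterMatrix B) (cs : CoxeterSystem M W)
    (N : Subgroup H) (n : B → H)
    -- N is normalized by each n b:
    (hnorm : ∀ b : B, ∀ x : H, x ∈ N ↔ n b * x * (n b)⁻¹ ∈ N)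
    -- n_s² ∈ N for all simple reflections:
    (hsq : ∀ b : B, n b * n b ∈ N)
    -- braid relations (k(b,b') = M b b' factors on each side):
    (hbraid : ∀ b b' : B, b ≠ b' → M b b' ≠ 0 →
      altWord (n b) (n b') (M b b') = altWord (n b') (n b) (M b b'))
    (l : List B) (hl : cs.wordProd l = 1) :
    (l.map n).prod ∈ N := by
  set K := Subgroup.normalizer (N : Set H)
  let nK : B → K := fun b ↦ ⟨n b, Subgroup.mem_normalizer_iff.mpr (hnorm b)⟩
  let π := QuotientGroup.mk' (N.subgroupOf K)
  have hsq' : ∀ b, π (nK b) * π (nK b) = 1 := fun b ↦ by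
    rw [← map_mul, QuotientGroup.mk'_apply, QuotientGroup.eq_one_iff]
    exact Subgroup.mem_subgroupOf.mpr (hsq b)
  have hbraid' : ∀ b b' : B, b ≠ b' → M b b' ≠ 0 →
      altWord (π (nK b)) (π (nK b')) (M b b') = altWord (π (nK b')) (π (nK b)) (M b b') := by
    intro b b' hne h0
    rw [← map_altWord, ← map_altWord]
    congr 1
    apply Subtype.ext
    have hcoe := map_altWord K.subtype
    simp only [Subgroup.coe_subtype] at hcoe
    rw [hcoe, hcoe]
    exact hbraid b b' hne h0
  have hprod := prod_map_eq_one_of_wordProd_eq_one cs (isLiftable_of_braid hsq' hbraid') hl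
  change (l.map (π ∘ nK)).prod = 1 at hprod
  rwa [← List.map_map, ← map_list_prod, QuotientGroup.mk'_apply, QuotientGroup.eq_one_iff,
    Subgroup.mem_subgroupOf, SubmonoidClass.coe_list_prod, List.map_map] at hprod

end Stmt11
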